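/- arXiv:1710.11284 — 2 statements merged into one kernel-verified Lean document; each statement's English description precedes it below -/
import Mathlib

section
/- Comparison principle for monotone schemes: Assume the scheme S satisfies (S1) and (S2), and let u, v ∈ C_b(G_h) satisfy S(h,t,x,u(t,x),[u]_{t,x}) ≤ g₁(t,x) in G_h⁺ and S(h,t,x,v(t,x),[v]_{t,x}) ≥ g₂(t,x) in G_h⁺, where g₁, g₂ ∈ C_b(G_h). Then for every (t,x) ∈ G_h: u(t,x) − v(t,x) ≤ e^{μt} · sup_{(s,y)∈∂*G_h} |(u(s,y)−v(s,y))^+|₀ + 2 t e^{μt} |(g₁−g₂)^+|₀, where μ is the constant in (S1). -/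
open Set MeasureTheory

noncomputable section

/-- Euclidean space ℝ^d. -/
abbrev Vec (d : ℕ) := EuclideanSpace ℝ (Fin d)

/-- Supremum norm of a function over a set. -/
noncomputable def supN {α E : Type*} [Norm E] (Q : Set α) (φ : α → E) : ℝ :=
  sSup ((fun p => ‖φ p‖) '' Q)

/-- Parabolic distance. -/
noncomputable def pdist {d : ℕ} (p q : ℝ × Vec d) : ℝ :=
  ‖p.2 - q.2‖ + |p.1 - q.1| ^ ((1 : ℝ)/2)

/-- Parabolic Hölder-δ seminorm over `Q`. -/
noncomputable def parSemiD {d : ℕ} {E : Type*} [NormedAddCommGroup E]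
    (δ : ℝ) (Q : Set (ℝ × Vec d)) (φ : ℝ × Vec d → E) : ℝ :=
  sSup {r | ∃ p ∈ Q, ∃ q ∈ Q, p ≠ q ∧ r = ‖φ p - φ q‖ / (pdist p q) ^ δ}

noncomputable def parSemi1 {d : ℕ} {E : Type*} [NormedAddCommGroup E]
    (Q : Set (ℝ × Vec d)) (φ : ℝ × Vec d → E) : ℝ := parSemiD 1 Q φ

noncomputable def parN1 {d : ℕ} {E : Type*} [NormedAddCommGroup E]
    (Q : Set (ℝ × Vec d)) (φ : ℝ × Vec d → E) : ℝ := supN Q φ + parSemi1 Q φ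

/-- Spatial Lipschitz seminorm. -/
noncomputable def lipSemi {d : ℕ} {E : Type*} [NormedAddCommGroup E]
    (S : Set (Vec d)) (ψ : Vec d → E) : ℝ :=
  sSup {r | ∃ x ∈ S, ∃ y ∈ S, x ≠ y ∧ r = ‖ψ x - ψ y‖ / ‖x - y‖}

/-- Time derivative. -/
noncomputable def tD {d : ℕ} (φ : ℝ × Vec d → ℝ) (p : ℝ × Vec d) : ℝ :=
  deriv (fun s => φ (s, p.2)) p.1

/-- i-th spatial partial derivative. -/
noncomputable def xDi {d : ℕ} (φ : ℝ × Vec d → ℝ) (p : ℝ × Vec d) (i : Fin d) : ℝ :=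
  fderiv ℝ (fun y => φ (p.1, y)) p.2 (EuclideanSpace.single i 1)

/-- Spatial gradient. -/
noncomputable def xD {d : ℕ} (φ : ℝ × Vec d → ℝ) (p : ℝ × Vec d) : Vec d :=
  (EuclideanSpace.equiv (Fin d) ℝ).symm fun i => xDi φ p i

/-- Spatial Hessian (as a `d × d` array). -/
noncomputable def xD2 {d : ℕ} (φ : ℝ × Vec d → ℝ) (p : ℝ × Vec d) (i j : Fin d) : ℝ :=
  fderiv ℝ (fun y => xDi φ (p.1, y) j) p.2 (EuclideanSpace.single i 1)

/-- The class `C^{1,2}`: continuous, once continuously differentiable in time and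
twice continuously differentiable in space. -/
def IsC12 {d : ℕ} (φ : ℝ × Vec d → ℝ) : Prop :=
  Continuous φ ∧
  (∀ p : ℝ × Vec d, DifferentiableAt ℝ (fun s => φ (s, p.2)) p.1) ∧
  (∀ p : ℝ × Vec d, DifferentiableAt ℝ (fun y => φ (p.1, y)) p.2) ∧
  (∀ (p : ℝ × Vec d) (j : Fin d), DifferentiableAt ℝ (fun y => xDi φ (p.1, y) j) p.2) ∧
  Continuous (tD φ) ∧ Continuous (xD φ) ∧ Continuous (fun p => xD2 φ p)

/-- The linear operator
`L(σ,b,c,ℓ)(s,q,X) = -tr[(1/2 σσᵀ) X] - b·q - c s - ℓ`. -/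
noncomputable def Lop {d P : ℕ} (σ : Fin d → Fin P → ℝ) (b : Fin d → ℝ) (c ℓ : ℝ)
    (s : ℝ) (q : Vec d) (X : Fin d → Fin d → ℝ) : ℝ :=
  -(∑ m, ∑ n, ((1 : ℝ)/2 * ∑ p, σ m p * σ n p) * X n m)
    - (∑ j, b j * q j) - c * s - ℓ

/-- The time-space cylinder `[0,T] × Ω̄`. -/
def QbT {d : ℕ} (T : ℝ) (Ω : Set (Vec d)) : Set (ℝ × Vec d) :=
  Icc (0 : ℝ) T ×ˢ closure Ω

/-- The open cylinder `Q_T = (0,T] × Ω`. -/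
def QT {d : ℕ} (T : ℝ) (Ω : Set (Vec d)) : Set (ℝ × Vec d) :=
  Ioc (0 : ℝ) T ×ˢ Ω

/-- The parabolic boundary `∂*Q_T = ({0} × Ω̄) ∪ ((0,T] × ∂Ω)`. -/
def pbdry {d : ℕ} (T : ℝ) (Ω : Set (Vec d)) : Set (ℝ × Vec d) :=
  ({(0 : ℝ)} ×ˢ closure Ω) ∪ (Ioc (0 : ℝ) T ×ˢ frontier Ω)

section Switch

variable {d P M : ℕ}

/-- Switching-system operator `F_i` (family-of-control-sets version). -/
noncomputable def Fsw (𝒜 : Fin M → Type)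
    (σ : ∀ i, 𝒜 i → ℝ × Vec d → Fin d → Fin P → ℝ)
    (b : ∀ i, 𝒜 i → ℝ × Vec d → Fin d → ℝ)
    (c ℓ : ∀ i, 𝒜 i → ℝ × Vec d → ℝ) (k : ℝ)
    (i : Fin M) (p : ℝ × Vec d) (r : Fin M → ℝ) (pt : ℝ) (px : Vec d)
    (X : Fin d → Fin d → ℝ) : ℝ :=
  max (pt + ⨆ α : 𝒜 i, Lop (σ i α p) (b i α p) (c i α p) (ℓ i α p) (r i) px X)
      (r i - sInf ((fun j => r j + k) '' {j | j ≠ i}))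

/-- Viscosity subsolution in `Q_T` of a general system of `M` equations. -/
def IsSubSol {M : ℕ} (T : ℝ) (Ω : Set (Vec d))
    (F : Fin M → (ℝ × Vec d) → (Fin M → ℝ) → ℝ → Vec d → (Fin d → Fin d → ℝ) → ℝ)
    (u : Fin M → ℝ × Vec d → ℝ) : Prop :=
  ∀ (i : Fin M) (φ : ℝ × Vec d → ℝ), IsC12 φ →
    ∀ p ∈ QT T Ω,
      IsMaxOn (fun q => u i q - φ q) (QbT T Ω) p →
      F i p (fun j => u j p) (tD φ p) (xD φ p) (xD2 φ p) ≤ 0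

/-- Viscosity supersolution in `Q_T` of a general system of `M` equations. -/
def IsSuperSol {M : ℕ} (T : ℝ) (Ω : Set (Vec d))
    (F : Fin M → (ℝ × Vec d) → (Fin M → ℝ) → ℝ → Vec d → (Fin d → Fin d → ℝ) → ℝ)
    (u : Fin M → ℝ × Vec d → ℝ) : Prop :=
  ∀ (i : Fin M) (φ : ℝ × Vec d → ℝ), IsC12 φ →
    ∀ p ∈ QT T Ω,
      IsMinOn (fun q => u i q - φ q) (QbT T Ω) p →
      0 ≤ F i p (fun j => u j p) (tD φ p) (xD φ p) (xD2 φ p)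

/-- Continuous viscosity solution of the Cauchy–Dirichlet problem with boundary and initial
conditions in the strong (pointwise) sense. -/
def IsSol {M : ℕ} (T : ℝ) (Ω : Set (Vec d))
    (F : Fin M → (ℝ × Vec d) → (Fin M → ℝ) → ℝ → Vec d → (Fin d → Fin d → ℝ) → ℝ)
    (Ψ₀ : Vec d → ℝ) (Ψ₁ : ℝ × Vec d → ℝ)
    (u : Fin M → ℝ × Vec d → ℝ) : Prop :=
  (∀ i, ContinuousOn (u i) (QbT T Ω)) ∧
  IsSubSol T Ω F u ∧ IsSuperSol T Ω F u ∧
  (∀ i, ∀ x ∈ closure Ω, u i (0, x) = Ψ₀ x) ∧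
  (∀ i, ∀ p ∈ Ioc (0 : ℝ) T ×ˢ frontier Ω, u i p = Ψ₁ p)

/-- Assumption (A1). -/
def A1 (T : ℝ) (Ω : Set (Vec d)) (𝒜 : Fin M → Type)
    (σ : ∀ i, 𝒜 i → ℝ × Vec d → Fin d → Fin P → ℝ)
    (b : ∀ i, 𝒜 i → ℝ × Vec d → Fin d → ℝ)
    (c ℓ : ∀ i, 𝒜 i → ℝ × Vec d → ℝ)
    (Ψ₀ : Vec d → ℝ) (C₀ : ℝ) : Prop :=
  0 ≤ C₀ ∧ ∀ (i : Fin M) (α : 𝒜 i),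
    lipSemi (closure Ω) Ψ₀ + parN1 (QbT T Ω) (σ i α) + parN1 (QbT T Ω) (b i α)
      + parN1 (QbT T Ω) (c i α) + parN1 (QbT T Ω) (ℓ i α) ≤ C₀

/-- Assumption (A2): existence of a barrier function. -/
def A2 (T : ℝ) (Ω : Set (Vec d)) (𝒜 : Fin M → Type)
    (σ : ∀ i, 𝒜 i → ℝ × Vec d → Fin d → Fin P → ℝ)
    (b : ∀ i, 𝒜 i → ℝ × Vec d → Fin d → ℝ)
    (c : ∀ i, 𝒜 i → ℝ × Vec d → ℝ)
    (ζ : ℝ × Vec d → ℝ) : Prop :=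
  IsC12 ζ ∧
  (∀ p ∈ QT T Ω, 0 < ζ p) ∧
  (∀ p ∈ Ioc (0 : ℝ) T ×ˢ frontier Ω, ζ p = 0) ∧
  ∀ (i : Fin M) (α : 𝒜 i), ∀ p ∈ QT T Ω,
    -(tD ζ p) + (∑ j, b i α p j * xDi ζ p j)
      + (∑ m, ∑ n, ((1 : ℝ)/2 * ∑ q, σ i α p m q * σ i α p n q) * xD2 ζ p n m)
      + c i α p * ζ p ≤ -1

/-- Assumption (A3). -/
def A3 (Ω : Set (Vec d)) (Ψ₀ : Vec d → ℝ) (Ψ₁ ζ : ℝ × Vec d → ℝ) (C₁ : ℝ) : Prop :=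
  IsC12 Ψ₁ ∧ 0 < C₁ ∧ ∀ x ∈ closure Ω, |Ψ₀ x - Ψ₁ (0, x)| ≤ C₁ * ζ (0, x)

end Switch

end

section SubsetModel

variable {d P M : ℕ}

/-- Switching-system operator where the control sets `A_i` are subsets of a common space `𝒜`. -/
noncomputable def FswS (𝒜 : Type) (Ai : Fin M → Set 𝒜)
    (σ : 𝒜 → ℝ × Vec d → Fin d → Fin P → ℝ)
    (b : 𝒜 → ℝ × Vec d → Fin d → ℝ)
    (c ℓ : 𝒜 → ℝ × Vec d → ℝ) (k : ℝ)
    (i : Fin M) (p : ℝ × Vec d) (r : Fin M → ℝ) (pt : ℝ) (px : Vec d)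
    (X : Fin d → Fin d → ℝ) : ℝ :=
  max (pt + sSup ((fun α => Lop (σ α p) (b α p) (c α p) (ℓ α p) (r i) px X) '' (Ai i)))
      (r i - sInf ((fun j => r j + k) '' {j | j ≠ i}))

/-- HJB operator `F(t,x,r,p_t,p_x,X) = p_t + sup_{α ∈ AA} L^α(t,x,r,p_x,X)`. -/
noncomputable def Fhjb (𝒜 : Type) (AA : Set 𝒜)
    (σ : 𝒜 → ℝ × Vec d → Fin d → Fin P → ℝ)
    (b : 𝒜 → ℝ × Vec d → Fin d → ℝ)
    (c ℓ : 𝒜 → ℝ × Vec d → ℝ)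
    (p : ℝ × Vec d) (r : ℝ) (pt : ℝ) (px : Vec d)
    (X : Fin d → Fin d → ℝ) : ℝ :=
  pt + sSup ((fun α => Lop (σ α p) (b α p) (c α p) (ℓ α p) r px X) '' AA)

/-- Viscosity subsolution in `Q_T` of a scalar equation `F = 0`. -/
def IsSubSolH (T : ℝ) (Ω : Set (Vec d))
    (F : (ℝ × Vec d) → ℝ → ℝ → Vec d → (Fin d → Fin d → ℝ) → ℝ)
    (u : ℝ × Vec d → ℝ) : Prop :=
  ∀ φ : ℝ × Vec d → ℝ, IsC12 φ →
    ∀ p ∈ QT T Ω,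
      IsMaxOn (fun q => u q - φ q) (QbT T Ω) p →
      F p (u p) (tD φ p) (xD φ p) (xD2 φ p) ≤ 0

/-- Viscosity supersolution in `Q_T` of a scalar equation `F = 0`. -/
def IsSuperSolH (T : ℝ) (Ω : Set (Vec d))
    (F : (ℝ × Vec d) → ℝ → ℝ → Vec d → (Fin d → Fin d → ℝ) → ℝ)
    (u : ℝ × Vec d → ℝ) : Prop :=
  ∀ φ : ℝ × Vec d → ℝ, IsC12 φ →
    ∀ p ∈ QT T Ω,
      IsMinOn (fun q => u q - φ q) (QbT T Ω) p →
      0 ≤ F p (u p) (tD φ p) (xD φ p) (xD2 φ p)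

/-- Continuous viscosity solution of a scalar Cauchy–Dirichlet problem, with boundary and
initial data attained pointwise (strong sense). -/
def IsSolH (T : ℝ) (Ω : Set (Vec d))
    (F : (ℝ × Vec d) → ℝ → ℝ → Vec d → (Fin d → Fin d → ℝ) → ℝ)
    (Ψ₀ : Vec d → ℝ) (Ψ₁ : ℝ × Vec d → ℝ)
    (u : ℝ × Vec d → ℝ) : Prop :=
  ContinuousOn u (QbT T Ω) ∧
  IsSubSolH T Ω F u ∧ IsSuperSolH T Ω F u ∧
  (∀ x ∈ closure Ω, u (0, x) = Ψ₀ x) ∧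
  (∀ p ∈ Ioc (0 : ℝ) T ×ˢ frontier Ω, u p = Ψ₁ p)

/-- Assumption (A1), for coefficients indexed by a common control space `𝒜`,
with norms taken over the set `Q`. -/
def A1S (Q : Set (ℝ × Vec d)) (Ω : Set (Vec d)) (𝒜 : Type)
    (σ : 𝒜 → ℝ × Vec d → Fin d → Fin P → ℝ)
    (b : 𝒜 → ℝ × Vec d → Fin d → ℝ)
    (c ℓ : 𝒜 → ℝ × Vec d → ℝ)
    (Ψ₀ : Vec d → ℝ) (C₀ : ℝ) : Prop :=
  0 ≤ C₀ ∧ ∀ α : 𝒜,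
    lipSemi (closure Ω) Ψ₀ + parN1 Q (σ α) + parN1 Q (b α)
      + parN1 Q (c α) + parN1 Q (ℓ α) ≤ C₀

/-- Assumption (A2) for coefficients indexed by a common control space `𝒜`. -/
def A2S (T : ℝ) (Ω : Set (Vec d)) (𝒜 : Type)
    (σ : 𝒜 → ℝ × Vec d → Fin d → Fin P → ℝ)
    (b : 𝒜 → ℝ × Vec d → Fin d → ℝ)
    (c : 𝒜 → ℝ × Vec d → ℝ)
    (ζ : ℝ × Vec d → ℝ) : Prop :=
  IsC12 ζ ∧
  (∀ p ∈ QT T Ω, 0 < ζ p) ∧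
  (∀ p ∈ Ioc (0 : ℝ) T ×ˢ frontier Ω, ζ p = 0) ∧
  ∀ α : 𝒜, ∀ p ∈ QT T Ω,
    -(tD ζ p) + (∑ j, b α p j * xDi ζ p j)
      + (∑ m, ∑ n, ((1 : ℝ)/2 * ∑ q, σ α p m q * σ α p n q) * xD2 ζ p n m)
      + c α p * ζ p ≤ -1

end SubsetModel


section Scheme

variable {d : ℕ}

/-- Interior grid points `G_h⁺ = G_h \ (({0}×Ω̄) ∪ ((0,T]×∂Ω))`. -/
def GhPlus (T : ℝ) (Ω : Set (Vec d)) (G : Set (ℝ × Vec d)) : Set (ℝ × Vec d) :=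
  G \ (({(0 : ℝ)} ×ˢ closure Ω) ∪ (Ioc (0 : ℝ) T ×ˢ frontier Ω))

/-- Discrete parabolic boundary `∂*G_h = G_h \ G_h⁺`. -/
def GhBdry (T : ℝ) (Ω : Set (Vec d)) (G : Set (ℝ × Vec d)) : Set (ℝ × Vec d) :=
  G \ GhPlus T Ω G

/-- Bounded grid functions (`C_b(G_h)`). -/
def BddOnG {α : Type*} (G : Set α) (u : α → ℝ) : Prop := ∃ R : ℝ, ∀ p ∈ G, |u p| ≤ R

/-- A numerical scheme `S(h, t, x, r, [u]_{t,x})`. -/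
abbrev Scheme (d : ℕ) := ℝ → ℝ → Vec d → ℝ → ((ℝ × Vec d) → ℝ) → ℝ

/-- Assumption (S1): monotonicity. -/
def S1mono (T : ℝ) (Ω : Set (Vec d)) (G : ℝ → Set (ℝ × Vec d)) (S : Scheme d)
    (lam mu h₀ : ℝ) : Prop :=
  0 ≤ lam ∧ 0 ≤ mu ∧ 0 < h₀ ∧
  ∀ h : ℝ, 0 < h → h ≤ h₀ →
   ∀ u v : ℝ × Vec d → ℝ, BddOnG (G h) u → BddOnG (G h) v → (∀ p ∈ G h, u p ≤ v p) →
   ∀ a b c : ℝ, 0 ≤ a → 0 ≤ b → 0 ≤ c →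
   ∀ r : ℝ, ∀ p ∈ GhPlus T Ω (G h),
     S h p.1 p.2 r v + b/2 - lam * c ≤
       S h p.1 p.2 (r + (Real.exp (mu * p.1) * (a + b * p.1) + c))
         (fun q => u q + (Real.exp (mu * q.1) * (a + b * q.1) + c))

/-- Assumption (S2): regularity of the scheme. -/
def S2reg (T : ℝ) (Ω : Set (Vec d)) (G : ℝ → Set (ℝ × Vec d)) (S : Scheme d) : Prop :=
  ∀ h : ℝ, 0 < h → ∀ φ : ℝ × Vec d → ℝ, BddOnG (G h) φ →
    (∃ R : ℝ, ∀ p ∈ GhPlus T Ω (G h), |S h p.1 p.2 (φ p) φ| ≤ R) ∧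
    ContinuousOn (fun p : ℝ × Vec d => S h p.1 p.2 (φ p) φ) (GhPlus T Ω (G h)) ∧
    (∀ R > (0 : ℝ), ∀ ε > (0 : ℝ), ∃ δ > (0 : ℝ), ∀ r r' : ℝ,
      |r| ≤ R → |r'| ≤ R → |r - r'| ≤ δ →
      ∀ p ∈ GhPlus T Ω (G h), |S h p.1 p.2 r φ - S h p.1 p.2 r' φ| ≤ ε)

/-- Assumption (S3)(i): consistency with the consistency error function `E(K̃, h, ε)`,
required only at grid points at distance more than `ε` from the lateral boundary. -/
def S3consistI (T : ℝ) (Ω : Set (Vec d)) (G : ℝ → Set (ℝ × Vec d)) (S : Scheme d)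
    (F : (ℝ × Vec d) → ℝ → ℝ → Vec d → (Fin d → Fin d → ℝ) → ℝ)
    (E : ℝ → ℝ → ℝ → ℝ) : Prop :=
  ∀ (Kt h ε : ℝ), 0 < Kt → 0 < h → 0 < ε →
   ∀ φ : ℝ × Vec d → ℝ, ContDiff ℝ (⊤ : ℕ∞) φ →
    (∀ β₀ n : ℕ, ∀ p ∈ QbT T Ω,
      ‖iteratedFDeriv ℝ n (fun y => iteratedDeriv β₀ (fun s => φ (s, y)) p.1) p.2‖
        ≤ Kt * ε ^ ((1 : ℝ) - 2*(β₀ : ℝ) - (n : ℝ))) →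
    ∀ p ∈ GhPlus T Ω (G h), p.2 ∈ Ω → ε < Metric.infDist p.2 (frontier Ω) →
      |F p (φ p) (tD φ p) (xD φ p) (xD2 φ p) - S h p.1 p.2 (φ p) φ| ≤ E Kt h ε

/-- Parabolic Hölder-δ norm. -/
noncomputable def parND (δ : ℝ) (Q : Set (ℝ × Vec d)) (φ : ℝ × Vec d → ℝ) : ℝ :=
  supN Q φ + parSemiD δ Q φ

/-- The norm `|φ|_{2,δ}` of the space `C²_δ`. -/
noncomputable def norm2D (δ : ℝ) (Q : Set (ℝ × Vec d)) (φ : ℝ × Vec d → ℝ) : ℝ :=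
  parND δ Q φ + parND δ Q (tD φ) + (∑ i, parND δ Q (fun p => xDi φ p i))
    + ∑ i, ∑ j, parND δ Q (fun p => xD2 φ p i j)

/-- Membership in `C²_δ`: `C^{1,2}` with finite `|·|_{2,δ}` norm on `Q`. -/
def MemC2D (δ : ℝ) (Q : Set (ℝ × Vec d)) (φ : ℝ × Vec d → ℝ) : Prop :=
  IsC12 φ ∧ ∃ R : ℝ,
    (∀ p ∈ Q, |φ p| ≤ R) ∧ (∀ p ∈ Q, |tD φ p| ≤ R) ∧
    (∀ p ∈ Q, ∀ i, |xDi φ p i| ≤ R) ∧ (∀ p ∈ Q, ∀ i j, |xD2 φ p i j| ≤ R) ∧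
    (∀ p ∈ Q, ∀ q ∈ Q, |φ p - φ q| ≤ R * (pdist p q) ^ δ) ∧
    (∀ p ∈ Q, ∀ q ∈ Q, |tD φ p - tD φ q| ≤ R * (pdist p q) ^ δ) ∧
    (∀ p ∈ Q, ∀ q ∈ Q, ∀ i, |xDi φ p i - xDi φ q i| ≤ R * (pdist p q) ^ δ) ∧
    (∀ p ∈ Q, ∀ q ∈ Q, ∀ i j, |xD2 φ p i j - xD2 φ q i j| ≤ R * (pdist p q) ^ δ)

/-- Assumption (S3)(ii): consistency on `C²_δ` functions. -/
def S3consistII (T : ℝ) (Ω : Set (Vec d)) (G : ℝ → Set (ℝ × Vec d)) (S : Scheme d)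
    (F : (ℝ × Vec d) → ℝ → ℝ → Vec d → (Fin d → Fin d → ℝ) → ℝ)
    (δ : ℝ) (Et : ℝ → ℝ → ℝ) : Prop :=
  (∀ R : ℝ, Filter.Tendsto (fun h => Et h R) (nhdsWithin 0 (Ioi 0)) (nhds 0)) ∧
  ∀ h : ℝ, 0 < h → ∀ φ : ℝ × Vec d → ℝ, MemC2D δ (QbT T Ω) φ →
    ∀ p ∈ GhPlus T Ω (G h),
      |F p (φ p) (tD φ p) (xD φ p) (xD2 φ p) - S h p.1 p.2 (φ p) φ|
        ≤ Et h (norm2D δ (QbT T Ω) φ)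

/-- A solution of the scheme with discrete data `g0` (initial) and `g1` (lateral). -/
def SchemeSol (T : ℝ) (Ω : Set (Vec d)) (G : ℝ → Set (ℝ × Vec d)) (S : Scheme d)
    (h : ℝ) (g0 g1 : ℝ × Vec d → ℝ) (u : ℝ × Vec d → ℝ) : Prop :=
  BddOnG (G h) u ∧
  (∀ p ∈ GhPlus T Ω (G h), S h p.1 p.2 (u p) u = 0) ∧
  (∀ p ∈ G h, p.1 = 0 → u p = g0 p) ∧
  (∀ p ∈ G h, p ∈ Ioc (0 : ℝ) T ×ˢ frontier Ω → u p = g1 p)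

/-- Assumption (S4): unique solvability of the scheme. -/
def S4stab (T : ℝ) (Ω : Set (Vec d)) (G : ℝ → Set (ℝ × Vec d)) (S : Scheme d)
    (g0 g1 : ℝ → ℝ × Vec d → ℝ) : Prop :=
  ∀ h : ℝ, 0 < h →
    (∃ u, SchemeSol T Ω G S h (g0 h) (g1 h) u) ∧
    (∀ u u', SchemeSol T Ω G S h (g0 h) (g1 h) u → SchemeSol T Ω G S h (g0 h) (g1 h) u' →
      ∀ p ∈ G h, u p = u' p)

end Scheme


/-- **Comparison principle for monotone schemes.**
If `S(h,·,·,u,[u]) ≤ g₁` and `S(h,·,·,v,[v]) ≥ g₂` on `G_h⁺`, then on `G_h`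
`u - v ≤ e^{μt} sup_{∂*G_h}(u-v)⁺ + 2 t e^{μt} |(g₁-g₂)⁺|₀`. -/
theorem scheme_comparison
    {d : ℕ} (T : ℝ) (hT : 0 < T) (Ω : Set (Vec d))
    (hΩopen : IsOpen Ω) (hΩbdd : Bornology.IsBounded Ω)
    (G : ℝ → Set (ℝ × Vec d)) (hG : ∀ h, G h ⊆ QbT T Ω)
    (S : Scheme d) (lam mu h₀ : ℝ)
    (hS1 : S1mono T Ω G S lam mu h₀)
    (hS2 : S2reg T Ω G S)
    (h : ℝ) (hh : 0 < h) (hh₀ : h ≤ h₀)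
    (u v g₁ g₂ : ℝ × Vec d → ℝ)
    (hub : BddOnG (G h) u) (hvb : BddOnG (G h) v)
    (hg₁b : BddOnG (G h) g₁) (hg₂b : BddOnG (G h) g₂)
    (hsub : ∀ p ∈ GhPlus T Ω (G h), S h p.1 p.2 (u p) u ≤ g₁ p)
    (hsuper : ∀ p ∈ GhPlus T Ω (G h), g₂ p ≤ S h p.1 p.2 (v p) v) :
    ∀ p ∈ G h,
      u p - v p ≤ Real.exp (mu * p.1)
          * sSup {r | ∃ q ∈ GhBdry T Ω (G h), r = max (u q - v q) 0}
        + 2 * p.1 * Real.exp (mu * p.1)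
          * sSup {r | ∃ q ∈ G h, r = max (g₁ q - g₂ q) 0} := by
  obtain ⟨hlam0, hmu0, hh₀pos, hS1'⟩ := hS1
  obtain ⟨Ru, hRu⟩ := hub
  obtain ⟨Rv, hRv⟩ := hvb
  obtain ⟨Rg₁, hRg₁⟩ := hg₁b
  obtain ⟨Rg₂, hRg₂⟩ := hg₂b
  intro p hp
  have htmem : ∀ q ∈ G h, q.1 ∈ Icc (0:ℝ) T := fun q hq => (hG h hq).1
  have hpT : p.1 ∈ Icc (0:ℝ) T := htmem p hp
  set K := sSup {r | ∃ q ∈ G h, r = max (g₁ q - g₂ q) 0} with hKdef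
  set a := sSup {r | ∃ q ∈ GhBdry T Ω (G h), r = max (u q - v q) 0} with hadef
  have hRu0 : 0 ≤ Ru := le_trans (abs_nonneg _) (hRu p hp)
  have hRv0 : 0 ≤ Rv := le_trans (abs_nonneg _) (hRv p hp)
  have hKbdd : BddAbove {r | ∃ q ∈ G h, r = max (g₁ q - g₂ q) 0} := by
    refine ⟨Rg₁ + Rg₂, ?_⟩
    rintro r ⟨q, hq, rfl⟩
    have h1 := abs_le.mp (hRg₁ q hq)
    have h2 := abs_le.mp (hRg₂ q hq)
    exact max_le (by linarith) (by linarith)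
  have hKle : ∀ q ∈ G h, g₁ q - g₂ q ≤ K :=
    fun q hq => le_trans (le_max_left _ _) (le_csSup hKbdd ⟨q, hq, rfl⟩)
  have hK0 : 0 ≤ K := le_trans (le_max_right _ _) (le_csSup hKbdd ⟨p, hp, rfl⟩)
  have habdd : BddAbove {r | ∃ q ∈ GhBdry T Ω (G h), r = max (u q - v q) 0} := by
    refine ⟨Ru + Rv, ?_⟩
    rintro r ⟨q, hq, rfl⟩
    have h1 := abs_le.mp (hRu q hq.1)
    have h2 := abs_le.mp (hRv q hq.1)
    exact max_le (by linarith) (by linarith)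
  have ha0 : 0 ≤ a := Real.sSup_nonneg (by rintro r ⟨q, hq, rfl⟩; exact le_max_right _ _)
  have hale : ∀ q ∈ GhBdry T Ω (G h), u q - v q ≤ a :=
    fun q hq => le_trans (le_max_left _ _) (le_csSup habdd ⟨q, hq, rfl⟩)
  have key : ∀ η > (0:ℝ), u p - v p ≤ Real.exp (mu * p.1) * (a + (2*K + η) * p.1) := by
    intro η hη
    set b := 2*K + η with hbdef
    have hb0 : 0 ≤ b := by rw [hbdef]; linarith
    set W : ℝ × Vec d → ℝ :=
      fun q => (u q - v q) * Real.exp (-(mu * q.1)) - (a + b * q.1) with hWdef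
    have hWbdd : BddAbove (W '' G h) := by
      refine ⟨Ru + Rv, ?_⟩
      rintro r ⟨q, hq, rfl⟩
      have hqT := htmem q hq
      have h1 := abs_le.mp (hRu q hq)
      have h2 := abs_le.mp (hRv q hq)
      have he1 : Real.exp (-(mu * q.1)) ≤ 1 := by
        rw [Real.exp_le_one_iff]
        have : 0 ≤ mu * q.1 := mul_nonneg hmu0 hqT.1
        linarith
      have he0 : 0 < Real.exp (-(mu * q.1)) := Real.exp_pos _
      have hbq : 0 ≤ a + b * q.1 := add_nonneg ha0 (mul_nonneg hb0 hqT.1)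
      simp only [hWdef]
      linarith [mul_le_mul_of_nonneg_right (show u q - v q ≤ Ru + Rv by linarith) he0.le,
        mul_le_mul_of_nonneg_left he1 (show (0:ℝ) ≤ Ru + Rv by linarith)]
    set σ := max 0 (sSup (W '' G h)) with hσdef
    have hσ0 : 0 ≤ σ := le_max_left _ _
    have hub' : ∀ q ∈ G h, u q - v q ≤ Real.exp (mu * q.1) * (a + σ + b * q.1) := by
      intro q hq
      have h1 : W q ≤ σ := le_trans (le_csSup hWbdd ⟨q, hq, rfl⟩) (le_max_right _ _)
      have hx : Real.exp (-(mu * q.1)) * Real.exp (mu * q.1) = 1 := by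
        rw [← Real.exp_add]; simp
      have h2 : (u q - v q) * Real.exp (-(mu * q.1)) ≤ a + σ + b * q.1 := by
        simp only [hWdef] at h1; linarith
      have h3 := mul_le_mul_of_nonneg_right h2 (Real.exp_pos (mu * q.1)).le
      rw [mul_assoc, hx, mul_one] at h3
      linarith
    have hσ_eq : σ = 0 := by
      by_contra hne
      have hσpos : 0 < σ := lt_of_le_of_ne hσ0 (Ne.symm hne)
      have hWne : (W '' G h).Nonempty := by
        by_contra hemp
        rw [Set.not_nonempty_iff_eq_empty] at hemp
        have : σ = 0 := by rw [hσdef, hemp, Real.sSup_empty, max_self]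
        linarith
      have hσ_sup : σ = sSup (W '' G h) := by
        have h0 : 0 ≤ sSup (W '' G h) := by
          by_contra hlt
          push_neg at hlt
          have : σ = 0 := by rw [hσdef, max_eq_left hlt.le]
          linarith
        rw [hσdef, max_eq_right h0]
      obtain ⟨-, -, hS2r⟩ := hS2 h hh u ⟨Ru, hRu⟩
      have hexP : 0 ≤ Real.exp (mu*T) * (a + σ + b*T) :=
        mul_nonneg (Real.exp_pos _).le (add_nonneg (add_nonneg ha0 hσ0) (mul_nonneg hb0 hT.le))
      set R := Ru + Rv + Real.exp (mu*T) * (a + σ + b*T) + 1 with hRdef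
      have hRpos : 0 < R := by rw [hRdef]; linarith
      obtain ⟨δ, hδpos, hδ⟩ := hS2r R hRpos (η/4) (by linarith)
      set δ₂ := min (σ/2) (δ * Real.exp (-(mu*T))) with hδ₂def
      have hδ₂pos : 0 < δ₂ := lt_min (by linarith) (mul_pos hδpos (Real.exp_pos _))
      have hδ₂σ : δ₂ ≤ σ/2 := min_le_left _ _
      obtain ⟨w, hwmem, hwgt⟩ := exists_lt_of_lt_csSup hWne
        (show σ - δ₂ < sSup (W '' G h) by rw [← hσ_sup]; linarith)
      obtain ⟨q, hqG, rfl⟩ := hwmem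
      have hqT : q.1 ∈ Icc (0:ℝ) T := htmem q hqG
      have hmuq : 0 ≤ mu * q.1 := mul_nonneg hmu0 hqT.1
      have hone_le : 1 ≤ Real.exp (mu * q.1) := Real.one_le_exp hmuq
      have hx : Real.exp (-(mu * q.1)) * Real.exp (mu * q.1) = 1 := by
        rw [← Real.exp_add]; simp
      have h1 : Real.exp (mu * q.1) * (a + σ - δ₂ + b * q.1) < u q - v q := by
        have h2 : a + σ - δ₂ + b * q.1 < (u q - v q) * Real.exp (-(mu * q.1)) := by
          simp only [hWdef] at hwgt; linarith
        have h3 := mul_lt_mul_of_pos_right h2 (Real.exp_pos (mu * q.1))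
        rw [mul_assoc, hx, mul_one] at h3
        linarith
      have hinner0 : 0 ≤ a + σ - δ₂ + b * q.1 := by
        have := mul_nonneg hb0 hqT.1
        linarith
      have hqplus : q ∈ GhPlus T Ω (G h) := by
        by_contra hnot
        have h2 := hale q ⟨hqG, hnot⟩
        have hM := mul_le_mul_of_nonneg_right hone_le hinner0
        have hbq := mul_nonneg hb0 hqT.1
        linarith [h1, h2, hM, hbq]
      set u₁ := fun q' : ℝ × Vec d => u q' - Real.exp (mu * q'.1) * ((a + σ) + b * q'.1)
        with hu₁def
      have hexp_mono : ∀ q' ∈ G h,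
          0 ≤ Real.exp (mu * q'.1) * ((a + σ) + b * q'.1) ∧
          Real.exp (mu * q'.1) * ((a + σ) + b * q'.1) ≤ Real.exp (mu*T) * (a + σ + b*T) := by
        intro q' hq'
        have hq'T := htmem q' hq'
        constructor
        · exact mul_nonneg (Real.exp_pos _).le
            (add_nonneg (add_nonneg ha0 hσ0) (mul_nonneg hb0 hq'T.1))
        · have he : Real.exp (mu * q'.1) ≤ Real.exp (mu*T) :=
            Real.exp_le_exp.mpr (mul_le_mul_of_nonneg_left hq'T.2 hmu0)
          have hi : (a + σ) + b * q'.1 ≤ a + σ + b*T := by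
            have := mul_le_mul_of_nonneg_left hq'T.2 hb0
            linarith
          exact mul_le_mul he hi
            (add_nonneg (add_nonneg ha0 hσ0) (mul_nonneg hb0 hq'T.1)) (Real.exp_pos _).le
      have hu₁bdd : BddOnG (G h) u₁ := by
        refine ⟨Ru + Real.exp (mu*T) * (a + σ + b*T), ?_⟩
        intro q' hq'
        obtain ⟨hm0, hm1⟩ := hexp_mono q' hq'
        have h2 := abs_le.mp (hRu q' hq')
        simp only [hu₁def]
        rw [abs_le]
        constructor <;> linarith
      have hle : ∀ q' ∈ G h, u₁ q' ≤ v q' := by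
        intro q' hq'
        have := hub' q' hq'
        simp only [hu₁def]
        linarith
      have hS1c := hS1' h hh hh₀ u₁ v hu₁bdd ⟨Rv, hRv⟩ hle (a + σ) b 0
        (by linarith) hb0 le_rfl (v q) q hqplus
      have hfun : (fun q' : ℝ × Vec d =>
          u₁ q' + (Real.exp (mu * q'.1) * ((a + σ) + b * q'.1) + 0)) = u := by
        funext q'
        simp only [hu₁def]
        ring
      rw [hfun] at hS1c
      have hbound1 : |u q| ≤ R := by
        have := hRu q hqG
        rw [hRdef]; linarith
      have hbound2 : |v q + (Real.exp (mu * q.1) * ((a + σ) + b * q.1) + 0)| ≤ R := by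
        obtain ⟨hm0, hm1⟩ := hexp_mono q hqG
        have h2 := abs_le.mp (hRv q hqG)
        rw [hRdef, abs_le]
        constructor <;> linarith
      have hδ₂e : δ₂ * Real.exp (mu * q.1) ≤ δ := by
        have h5 : δ₂ ≤ δ * Real.exp (-(mu*T)) := min_le_right _ _
        have he : Real.exp (mu * q.1) ≤ Real.exp (mu*T) :=
          Real.exp_le_exp.mpr (mul_le_mul_of_nonneg_left hqT.2 hmu0)
        have hxx : Real.exp (-(mu*T)) * Real.exp (mu*T) = 1 := by
          rw [← Real.exp_add]; simp
        calc δ₂ * Real.exp (mu * q.1)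
            ≤ (δ * Real.exp (-(mu*T))) * Real.exp (mu * q.1) :=
              mul_le_mul_of_nonneg_right h5 (Real.exp_pos _).le
          _ ≤ (δ * Real.exp (-(mu*T))) * Real.exp (mu*T) :=
              mul_le_mul_of_nonneg_left he (by positivity)
          _ = δ := by rw [mul_assoc, hxx, mul_one]
      have hclose : |u q - (v q + (Real.exp (mu * q.1) * ((a + σ) + b * q.1) + 0))| ≤ δ := by
        have hup := hub' q hqG
        rw [abs_le]
        have hd := hδpos
        constructor <;> linarith [h1, hδ₂e, hup]
      have hδc := hδ (u q) (v q + (Real.exp (mu * q.1) * ((a + σ) + b * q.1) + 0))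
        hbound1 hbound2 hclose q hqplus
      have habs := abs_le.mp hδc
      have hsub' := hsub q hqplus
      have hsuper' := hsuper q hqplus
      have hK' := hKle q hqG
      linarith [habs.1, habs.2, hS1c]
    have := hub' p hp
    rw [hσ_eq] at this
    linarith [this]
  have hp0 : 0 ≤ p.1 := hpT.1
  have hc0 : 0 ≤ p.1 * Real.exp (mu * p.1) := mul_nonneg hp0 (Real.exp_pos _).le
  refine le_of_forall_pos_le_add ?_
  intro ε hε
  have hηpos : 0 < ε / (p.1 * Real.exp (mu * p.1) + 1) := by positivity
  have hk := key _ hηpos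
  have hfrac : ε / (p.1 * Real.exp (mu * p.1) + 1) * (p.1 * Real.exp (mu * p.1)) ≤ ε := by
    rw [div_mul_eq_mul_div, div_le_iff₀ (by positivity)]
    nlinarith
  linarith [hk, hfrac]
end

section
/- Lower bound for the numerical solution at the first interior node: Let J ∈ ℕ with J ≥ 2, Δx := 1/J, and Δt > 0 satisfy Δt·(1 + 1/(16Δx²)) ≤ 1 and Δt ≤ 1/2. Let U^n_j be defined by U^0_j = 1, U^n_0 = U^n_J = 1, and U^n_j = U^{n−1}_j + Δt·[ (x_j²(1−x_j)²/(2Δx²))·(U^{n−1}_{j+1} − 2U^{n−1}_j + U^{n−1}_{j−1}) − U^{n−1}_j ] for 1 ≤ j ≤ J−1, where x_j := jΔx. Then for every n ≥ 0: U^n_1 ≥ Σ_{m=0}^{n−1} (1−2Δt)^m · (Δt/2)·(1−Δx)² + (1−2Δt)^n. -/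
open Finset

/-!
Rewriting the update as a combination of neighbouring values with coefficients that are
nonnegative under the CFL condition shows `U ≥ 0` everywhere. At `j = 1`, where the diffusion
coefficient is `(1 - Δx)² / 2`, this nonnegativity of `U^n_1` and `U^n_2` gives
`U^{n+1}_1 ≥ (1 - 2Δt) U^n_1 + (Δt/2)(1 - Δx)²`, and iterating this affine recurrence
(with `1 - 2Δt ≥ 0`) from `U^0_1 = 1` yields the bound.
-/

theorem geom_sum_add_pow_le_of_affine_le {α : Type*} [CommSemiring α] [PartialOrder α]
    [IsOrderedRing α] {r c : α} (hr : 0 ≤ r) {V : ℕ → α} (h₀ : 1 ≤ V 0)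
    (hstep : ∀ n, r * V n + c ≤ V (n + 1)) :
    ∀ n, (∑ m ∈ range n, r ^ m * c) + r ^ n ≤ V n := by
  intro n
  induction n with
  | zero => simpa using h₀
  | succ n ih =>
    calc (∑ m ∈ range (n + 1), r ^ m * c) + r ^ (n + 1)
        = r * ((∑ m ∈ range n, r ^ m * c) + r ^ n) + c := by
          rw [sum_range_succ', mul_add, mul_sum]
          simp only [pow_succ', mul_assoc]
          ring
      _ ≤ r * V n + c := by gcongr
      _ ≤ V (n + 1) := hstep n

theorem sq_mul_one_sub_sq_le {x : ℝ} (hx₀ : 0 ≤ x) (hx₁ : x ≤ 1) :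
    x ^ 2 * (1 - x) ^ 2 ≤ 1 / 16 := by
  have h : x * (1 - x) ≤ 1 / 4 := by nlinarith [sq_nonneg (x - 1 / 2)]
  have h' : 0 ≤ x * (1 - x) := mul_nonneg hx₀ (by linarith)
  nlinarith

theorem explicit_step_nonneg {Δt b uₗ u uᵣ : ℝ} (hΔt : 0 ≤ Δt) (hb : 0 ≤ b)
    (hcfl : Δt * (1 + 2 * b) ≤ 1) (huₗ : 0 ≤ uₗ) (hu : 0 ≤ u) (huᵣ : 0 ≤ uᵣ) :
    0 ≤ u + Δt * (b * (uᵣ - 2 * u + uₗ) - u) := by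
  have hdiag : 0 ≤ 1 - Δt * (1 + 2 * b) := by linarith
  have hoff : 0 ≤ Δt * b := mul_nonneg hΔt hb
  calc (0 : ℝ) ≤ Δt * b * uᵣ + Δt * b * uₗ + (1 - Δt * (1 + 2 * b)) * u := by positivity
    _ = u + Δt * (b * (uᵣ - 2 * u + uₗ) - u) := by ring

theorem cfl_at_node {Δt Δx x : ℝ} (hΔt : 0 ≤ Δt) (hx₀ : 0 ≤ x) (hx₁ : x ≤ 1)
    (hCFL : Δt * (1 + 1 / (16 * Δx ^ 2)) ≤ 1) :
    Δt * (1 + 2 * (x ^ 2 * (1 - x) ^ 2 / (2 * Δx ^ 2))) ≤ 1 := by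
  have hcoef : 2 * (x ^ 2 * (1 - x) ^ 2 / (2 * Δx ^ 2)) ≤ 1 / (16 * Δx ^ 2) := by
    calc 2 * (x ^ 2 * (1 - x) ^ 2 / (2 * Δx ^ 2)) = x ^ 2 * (1 - x) ^ 2 / Δx ^ 2 := by
          field_simp
      _ ≤ (1 / 16) / Δx ^ 2 := by gcongr; exact sq_mul_one_sub_sq_le hx₀ hx₁
      _ = 1 / (16 * Δx ^ 2) := by rw [div_div]
  calc Δt * (1 + 2 * (x ^ 2 * (1 - x) ^ 2 / (2 * Δx ^ 2)))
      ≤ Δt * (1 + 1 / (16 * Δx ^ 2)) := by gcongr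
    _ ≤ 1 := hCFL

theorem scheme_nonneg (J : ℕ) (Δx Δt : ℝ) (hΔx : Δx = 1 / (J : ℝ)) (hΔt : 0 ≤ Δt)
    (hCFL : Δt * (1 + 1 / (16 * Δx ^ 2)) ≤ 1) (U : ℕ → ℕ → ℝ)
    (hinit : ∀ j ≤ J, U 0 j = 1) (hbc0 : ∀ n, U n 0 = 1) (hbcJ : ∀ n, U n J = 1)
    (hupd : ∀ n : ℕ, ∀ j : ℕ, 1 ≤ j → j ≤ J - 1 →
      U (n + 1) j = U n j
        + Δt * ((((j : ℝ) * Δx) ^ 2 * (1 - (j : ℝ) * Δx) ^ 2 / (2 * Δx ^ 2))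
              * (U n (j + 1) - 2 * U n j + U n (j - 1)) - U n j)) :
    ∀ n, ∀ j ≤ J, 0 ≤ U n j := by
  intro n
  induction n with
  | zero => intro j hj; simp [hinit j hj]
  | succ n ih =>
    intro j hj
    rcases Nat.eq_zero_or_pos j with rfl | hj₁
    · simp [hbc0]
    rcases eq_or_lt_of_le hj with rfl | hjJ
    · simp [hbcJ]
    have hx₀ : 0 ≤ (j : ℝ) * Δx := by rw [hΔx]; positivity
    have hx₁ : (j : ℝ) * Δx ≤ 1 := by
      rw [hΔx, mul_one_div]
      exact div_le_one_of_le₀ (by exact_mod_cast hj) (Nat.cast_nonneg J)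
    rw [hupd n j hj₁ (by omega)]
    exact explicit_step_nonneg hΔt (by positivity) (cfl_at_node hΔt hx₀ hx₁ hCFL)
      (ih _ (by omega)) (ih j hj) (ih _ (by omega))

theorem first_node_step_ge {Δx Δt u₁ u₂ : ℝ} (hΔx₀ : 0 < Δx) (hΔx₂ : Δx ≤ 2)
    (hΔt : 0 ≤ Δt) (hu₁ : 0 ≤ u₁) (hu₂ : 0 ≤ u₂) :
    (1 - 2 * Δt) * u₁ + Δt / 2 * (1 - Δx) ^ 2
      ≤ u₁ + Δt * (Δx ^ 2 * (1 - Δx) ^ 2 / (2 * Δx ^ 2) * (u₂ - 2 * u₁ + 1) - u₁) := by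
  have hcoef : Δx ^ 2 * (1 - Δx) ^ 2 / (2 * Δx ^ 2) = (1 - Δx) ^ 2 / 2 := by
    field_simp
  -- the step loses `Δt (1 - (1 - Δx)²) u₁ = Δt Δx (2 - Δx) u₁ ≥ 0` against `(1 - 2Δt) u₁`
  have hloss : 0 ≤ Δt * (Δx * (2 - Δx)) * u₁ := by
    have : 0 ≤ 2 - Δx := by linarith
    positivity
  have hgain : 0 ≤ Δt / 2 * (1 - Δx) ^ 2 * u₂ := by positivity
  rw [hcoef]
  nlinarith

/-- **Lower bound for the numerical solution at the first interior node.**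
Under the CFL-type condition and `Δt ≤ 1/2`,
`U^n_1 ≥ Σ_{m=0}^{n-1} (1-2Δt)^m (Δt/2)(1-Δx)² + (1-2Δt)^n`. -/
theorem first_interior_node_lower_bound
    (J : ℕ) (hJ : 2 ≤ J) (Δx Δt : ℝ)
    (hΔx : Δx = 1 / (J : ℝ)) (hΔt : 0 < Δt)
    (hCFL : Δt * (1 + 1 / (16 * Δx ^ 2)) ≤ 1)
    (hΔt2 : Δt ≤ 1 / 2)
    (U : ℕ → ℕ → ℝ)
    (hinit : ∀ j ≤ J, U 0 j = 1)
    (hbc0 : ∀ n, U n 0 = 1) (hbcJ : ∀ n, U n J = 1)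
    (hupd : ∀ n : ℕ, ∀ j : ℕ, 1 ≤ j → j ≤ J - 1 →
      U (n + 1) j = U n j
        + Δt * ((((j : ℝ) * Δx) ^ 2 * (1 - (j : ℝ) * Δx) ^ 2 / (2 * Δx ^ 2))
              * (U n (j + 1) - 2 * U n j + U n (j - 1)) - U n j)) :
    ∀ n : ℕ,
      (∑ m ∈ Finset.range n, (1 - 2 * Δt) ^ m * (Δt / 2) * (1 - Δx) ^ 2)
        + (1 - 2 * Δt) ^ n ≤ U n 1 := by
  have hnonneg := scheme_nonneg J Δx Δt hΔx hΔt.le hCFL U hinit hbc0 hbcJ hupd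
  have hΔx₀ : 0 < Δx := by rw [hΔx]; positivity
  have hΔx₁ : Δx ≤ 1 := by
    rw [hΔx]; exact div_le_one_of_le₀ (by exact_mod_cast (by omega : 1 ≤ J)) (Nat.cast_nonneg J)
  have hstep : ∀ n, (1 - 2 * Δt) * U n 1 + Δt / 2 * (1 - Δx) ^ 2 ≤ U (n + 1) 1 := by
    intro n
    have h := hupd n 1 le_rfl (by omega)
    simp only [Nat.cast_one, one_mul, Nat.reduceAdd, Nat.sub_self, hbc0] at h
    rw [h]
    exact first_node_step_ge hΔx₀ (by linarith) hΔt.le (hnonneg n 1 (by omega)) (hnonneg n 2 hJ)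
  simpa only [mul_assoc] using
    geom_sum_add_pow_le_of_affine_le (by linarith) (hinit 1 (by omega)).ge hstep
end
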